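/- Let y : Ω → ℝ³ be a smooth immersion with g = I[y] and a = g^{-1/2}. Then for each pair (i,j), Σ_{k=1}^3 (a D²y_k a)_{ij}² = (a II[y] a)_{ij}² + f_{ij}, where f_{ij} = Σ_{l₁,l₂} g_{l₁l₂} Σ_{m₁,m₂,n₁,n₂} a_{im₁} a_{im₂} Γ^{l₁}_{m₁n₁} Γ^{l₂}_{m₂n₂} a_{n₁j} a_{n₂j} ≥ 0 depends only on g and its first derivatives; summing over i,j gives |g^{-1/2} D²y g^{-1/2}|² = |g^{-1/2} II[y] g^{-1/2}|² + f₁ with f₁ = Σ_{ij} f_{ij}. -/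
import Mathlib


open Real Matrix

noncomputable def pd1 (f : ℝ → ℝ → ℝ) (x₁ x₂ : ℝ) : ℝ := deriv (fun s => f s x₂) x₁

noncomputable def pd2 (f : ℝ → ℝ → ℝ) (x₁ x₂ : ℝ) : ℝ := deriv (fun t => f x₁ t) x₂

noncomputable def pd (i : Fin 2) (f : ℝ → ℝ → ℝ) : ℝ → ℝ → ℝ :=
  if i = 0 then pd1 f else pd2 f

def cross3 (u v : Fin 3 → ℝ) : Fin 3 → ℝ :=
  ![u 1 * v 2 - u 2 * v 1, u 2 * v 0 - u 0 * v 2, u 0 * v 1 - u 1 * v 0]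

/-- with `a = g^{-1/2}`, for each `(i,j)`,
`Σ_k (a D²y_k a)_{ij}² = (a II a)_{ij}² + f_{ij}` with `f_{ij} ≥ 0` depending only
on `g`, `a` and the Christoffel symbols; summing over `i,j` yields
`|g^{-1/2} D²y g^{-1/2}|² = |g^{-1/2} II g^{-1/2}|² + f₁`. -/
theorem stmt13 (Ω : Set (ℝ × ℝ)) (hΩ : IsOpen Ω) (y : Fin 3 → ℝ → ℝ → ℝ)
    (hy : ∀ k : Fin 3, ContDiffOn ℝ (⊤ : ℕ∞) (fun p : ℝ × ℝ => y k p.1 p.2) Ω)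
    (g a : ℝ × ℝ → Matrix (Fin 2) (Fin 2) ℝ)
    (hg : ∀ p ∈ Ω, ∀ i j : Fin 2,
      g p i j = ∑ k : Fin 3, pd i (y k) p.1 p.2 * pd j (y k) p.1 p.2)
    (hasym : ∀ p ∈ Ω, (a p)ᵀ = a p)
    (hapd : ∀ p ∈ Ω, (a p).PosDef)
    (hainv : ∀ p ∈ Ω, a p * a p * g p = 1)
    (Γ : ℝ × ℝ → Fin 2 → Fin 2 → Fin 2 → ℝ)
    (II : ℝ × ℝ → Fin 2 → Fin 2 → ℝ) (ν : ℝ × ℝ → Fin 3 → ℝ)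
    (hν : ∀ p ∈ Ω, ν p = fun k =>
      cross3 (fun l => pd1 (y l) p.1 p.2) (fun l => pd2 (y l) p.1 p.2) k /
        Real.sqrt (∑ l : Fin 3,
          cross3 (fun m => pd1 (y m) p.1 p.2) (fun m => pd2 (y m) p.1 p.2) l ^ 2))
    (hII : ∀ p ∈ Ω, ∀ i j : Fin 2,
      II p i j = ∑ k : Fin 3, pd i (pd j (y k)) p.1 p.2 * ν p k)
    (hdec : ∀ p ∈ Ω, ∀ i j : Fin 2, ∀ k : Fin 3,
      pd i (pd j (y k)) p.1 p.2
        = (∑ l : Fin 2, Γ p i j l * pd l (y k) p.1 p.2) + II p i j * ν p k)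
    (f : ℝ × ℝ → Fin 2 → Fin 2 → ℝ)
    (hf : ∀ p ∈ Ω, ∀ i j : Fin 2,
      f p i j = ∑ l₁ : Fin 2, ∑ l₂ : Fin 2, g p l₁ l₂ *
        (∑ m₁ : Fin 2, ∑ m₂ : Fin 2, ∑ n₁ : Fin 2, ∑ n₂ : Fin 2,
          a p i m₁ * a p i m₂ * Γ p m₁ n₁ l₁ * Γ p m₂ n₂ l₂ * a p n₁ j * a p n₂ j)) :
    ∀ p ∈ Ω,
      (∀ i j : Fin 2,
        (∑ k : Fin 3,
          (∑ m : Fin 2, ∑ n : Fin 2, a p i m * pd m (pd n (y k)) p.1 p.2 * a p n j) ^ 2)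
          = (∑ m : Fin 2, ∑ n : Fin 2, a p i m * II p m n * a p n j) ^ 2 + f p i j) ∧
      (∀ i j : Fin 2, 0 ≤ f p i j) ∧
      (∑ i : Fin 2, ∑ j : Fin 2, ∑ k : Fin 3,
          (∑ m : Fin 2, ∑ n : Fin 2, a p i m * pd m (pd n (y k)) p.1 p.2 * a p n j) ^ 2)
        = (∑ i : Fin 2, ∑ j : Fin 2,
            (∑ m : Fin 2, ∑ n : Fin 2, a p i m * II p m n * a p n j) ^ 2)
          + ∑ i : Fin 2, ∑ j : Fin 2, f p i j := by
  intro p hp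
  -- abbreviations
  have hpd0 : ∀ h : ℝ → ℝ → ℝ, pd 0 h = pd1 h := fun h => by simp [pd]
  have hpd1 : ∀ h : ℝ → ℝ → ℝ, pd 1 h = pd2 h := fun h => by simp [pd]
  set S : ℝ := ∑ l : Fin 3,
      cross3 (fun m => pd1 (y m) p.1 p.2) (fun m => pd2 (y m) p.1 p.2) l ^ 2 with hS
  have hS_nonneg : 0 ≤ S := Finset.sum_nonneg fun _ _ => sq_nonneg _
  -- Lagrange identity : S = det g
  have hSdet : S = g p 0 0 * g p 1 1 - g p 0 1 * g p 1 0 := by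
    rw [hS, hg p hp 0 0, hg p hp 0 1, hg p hp 1 0, hg p hp 1 1]
    simp only [Fin.sum_univ_three, cross3, hpd0, hpd1, Matrix.cons_val_zero,
      Matrix.cons_val_one, Matrix.head_cons, Matrix.cons_val_two, Matrix.tail_cons]
    ring
  have hdg : (g p).det ≠ 0 := by
    have h1 : ((a p) * (a p) * (g p)).det = 1 := by rw [hainv p hp]; simp
    rw [Matrix.det_mul, Matrix.det_mul] at h1
    intro h
    rw [h, mul_zero] at h1
    exact one_ne_zero h1.symm
  have hS_ne : S ≠ 0 := by
    rw [hSdet]; rw [Matrix.det_fin_two] at hdg; exact hdg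
  -- norm of ν is 1
  have hnorm : ∑ k : Fin 3, ν p k ^ 2 = 1 := by
    rw [hν p hp]
    simp only [div_pow]
    rw [← Finset.sum_div, Real.sq_sqrt hS_nonneg, ← hS, div_self hS_ne]
  -- orthogonality of ν to tangent vectors
  have ho0 : ∑ k : Fin 3, pd 0 (y k) p.1 p.2 * ν p k = 0 := by
    rw [hν p hp]
    simp only [hpd0, Fin.sum_univ_three, cross3, Matrix.cons_val_zero,
      Matrix.cons_val_one, Matrix.head_cons, Matrix.cons_val_two, Matrix.tail_cons]
    ring
  have ho1 : ∑ k : Fin 3, pd 1 (y k) p.1 p.2 * ν p k = 0 := by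
    rw [hν p hp]
    simp only [hpd1, Fin.sum_univ_three, cross3, Matrix.cons_val_zero,
      Matrix.cons_val_one, Matrix.head_cons, Matrix.cons_val_two, Matrix.tail_cons]
    ring
  simp only [Fin.sum_univ_three] at ho0 ho1 hnorm
  -- main pointwise identity
  have main : ∀ i j : Fin 2,
      (∑ k : Fin 3,
          (∑ m : Fin 2, ∑ n : Fin 2, a p i m * pd m (pd n (y k)) p.1 p.2 * a p n j) ^ 2)
        = (∑ m : Fin 2, ∑ n : Fin 2, a p i m * II p m n * a p n j) ^ 2 + f p i j
      ∧ 0 ≤ f p i j := by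
    intro i j
    set B : ℝ := ∑ m : Fin 2, ∑ n : Fin 2, a p i m * II p m n * a p n j with hB
    set C0 : ℝ := ∑ m : Fin 2, ∑ n : Fin 2, a p i m * Γ p m n 0 * a p n j with hC0
    set C1 : ℝ := ∑ m : Fin 2, ∑ n : Fin 2, a p i m * Γ p m n 1 * a p n j with hC1
    have h1 : ∀ k : Fin 3,
        (∑ m : Fin 2, ∑ n : Fin 2, a p i m * pd m (pd n (y k)) p.1 p.2 * a p n j)
          = C0 * pd 0 (y k) p.1 p.2 + C1 * pd 1 (y k) p.1 p.2 + B * ν p k := by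
      intro k
      rw [hB, hC0, hC1]
      simp only [Fin.sum_univ_two]
      rw [hdec p hp 0 0 k, hdec p hp 0 1 k, hdec p hp 1 0 k, hdec p hp 1 1 k]
      simp only [Fin.sum_univ_two]
      ring
    have hg00 := hg p hp 0 0
    have hg01 := hg p hp 0 1
    have hg10 := hg p hp 1 0
    have hg11 := hg p hp 1 1
    simp only [Fin.sum_univ_three] at hg00 hg01 hg10 hg11
    have hfval : f p i j = C0 * C0 * g p 0 0 + C0 * C1 * g p 0 1
        + C1 * C0 * g p 1 0 + C1 * C1 * g p 1 1 := by
      rw [hf p hp i j, hC0, hC1]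
      simp only [Fin.sum_univ_two]
      ring
    constructor
    · have h2 : (∑ k : Fin 3,
          (C0 * pd 0 (y k) p.1 p.2 + C1 * pd 1 (y k) p.1 p.2 + B * ν p k) ^ 2)
          = B ^ 2 + f p i j := by
        rw [hfval]
        simp only [Fin.sum_univ_three]
        linear_combination (-(C0 * C0)) * hg00 - C0 * C1 * hg01 - C1 * C0 * hg10 -
          C1 * C1 * hg11 + 2 * B * C0 * ho0 + 2 * B * C1 * ho1 + B ^ 2 * hnorm
      rw [Finset.sum_congr rfl fun k _ => by rw [h1 k], h2]
    · have hfsq : f p i j = ∑ k : Fin 3,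
          (C0 * pd 0 (y k) p.1 p.2 + C1 * pd 1 (y k) p.1 p.2) ^ 2 := by
        rw [hfval, hg p hp 0 0, hg p hp 0 1, hg p hp 1 0, hg p hp 1 1]
        simp only [Fin.sum_univ_three]
        ring
      rw [hfsq]
      exact Finset.sum_nonneg fun _ _ => sq_nonneg _
  refine ⟨fun i j => (main i j).1, fun i j => (main i j).2, ?_⟩
  rw [Finset.sum_congr rfl fun i _ => Finset.sum_congr rfl fun j _ => (main i j).1]
  simp only [Finset.sum_add_distrib]
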